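/- (Fundamental Theorem of Zeon Algebra, spectrally simple case) Let φ(u) be a monic polynomial over CZ_n and let f(u) be the complex polynomial obtained by taking scalar parts of the coefficients of φ. If λ_0 ∈ ℂ is a simple zero of f, then there exists a unique λ ∈ CZ_n with ⟨λ⟩_0 = λ_0 and φ(λ) = 0; moreover λ is a simple zero of φ, i.e., φ(u) = (u − λ)q(u) with q(λ) invertible. -/

import Mathlib

noncomputable section

/-- The ideal of squares of generators defining the zeon algebra. -/
def zeonIdeal (n : ℕ) : Ideal (MvPolynomial (Fin n) ℂ) :=
  Ideal.span (Set.range fun i : Fin n => (MvPolynomial.X i : MvPolynomial (Fin n) ℂ) ^ 2)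

/-- The `n`-particle complex zeon algebra `CZ_n`. -/
abbrev Zeon (n : ℕ) := MvPolynomial (Fin n) ℂ ⧸ zeonIdeal n

/-- The scalar part `⟨u⟩₀` of a zeon, as a `ℂ`-algebra homomorphism. -/
def scalarPart (n : ℕ) : Zeon n →ₐ[ℂ] ℂ :=
  Ideal.Quotient.liftₐ (zeonIdeal n) (MvPolynomial.aeval fun _ => (0 : ℂ)) (by
    intro a ha
    have h : zeonIdeal n ≤ RingHom.ker
        (MvPolynomial.aeval (R := ℂ) fun _ : Fin n => (0 : ℂ)).toRingHom := by
      rw [zeonIdeal, Ideal.span_le]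
      rintro _ ⟨i, rfl⟩
      simp [RingHom.mem_ker]
    exact h ha)

/-- The dual (nilpotent) part `Du = u - ⟨u⟩₀`. -/
def dualPart (n : ℕ) (u : Zeon n) : Zeon n := u - algebraMap ℂ (Zeon n) (scalarPart n u)

/-- The generator `ζ_i`. -/
def zeta (n : ℕ) (i : Fin n) : Zeon n := Ideal.Quotient.mk _ (MvPolynomial.X i)

/-- The basis blade `ζ_I`. -/
def blade (n : ℕ) (I : Finset (Fin n)) : Zeon n :=
  Ideal.Quotient.mk _ (∏ i ∈ I, MvPolynomial.X i)

/-!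
The kernel of the scalar part consists of nilpotents, since every generator `ζ_i` squares to
zero; hence a zeon is invertible exactly when its scalar part is nonzero. For `x = λ₀` viewed as
a zeon, `φ(x)` therefore has scalar part `f(λ₀) = 0` and is nilpotent, while `φ'(x)` has scalar
part `f'(λ₀) ≠ 0` and is a unit. Newton's iteration (Hensel's lemma for nilpotent errors) then
gives a unique root `λ` of `φ` with `x - λ` nilpotent, i.e. with `⟨λ⟩₀ = λ₀`. Finally, if
`φ = (u - λ) q` then `q(λ) = φ'(λ)`, which is again a unit.
-/

namespace Polynomial

theorem eval_derivative_X_sub_C_mul {R : Type*} [CommRing R] (a : R) (q : R[X]) :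
    ((X - C a) * q).derivative.eval a = q.eval a := by
  simp [derivative_mul]

end Polynomial

section Zeon

variable {n : ℕ}

theorem isNilpotent_zeta (i : Fin n) : IsNilpotent (zeta n i) :=
  ⟨2, by
    rw [zeta, ← map_pow, Ideal.Quotient.eq_zero_iff_mem]
    exact Ideal.subset_span ⟨i, rfl⟩⟩

theorem scalarPart_mk (p : MvPolynomial (Fin n) ℂ) :
    scalarPart n (Ideal.Quotient.mk _ p) = MvPolynomial.constantCoeff p := by
  change MvPolynomial.aeval (fun _ => (0 : ℂ)) p = _
  simp

theorem isNilpotent_dualPart (u : Zeon n) : IsNilpotent (dualPart n u) := by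
  obtain ⟨p, rfl⟩ := Ideal.Quotient.mk_surjective u
  change dualPart n (Ideal.Quotient.mk _ p) ∈ nilradical (Zeon n)
  rw [dualPart, scalarPart_mk]
  induction p using MvPolynomial.induction_on with
  | C a =>
    rw [MvPolynomial.constantCoeff_C, ← MvPolynomial.algebraMap_eq, Ideal.Quotient.mk_algebraMap,
      sub_self]
    exact zero_mem _
  | add p q hp hq =>
    convert add_mem hp hq using 1
    simp only [map_add]
    ring
  | mul_X p i _ =>
    rw [map_mul, map_mul, MvPolynomial.constantCoeff_X, mul_zero, map_zero, sub_zero]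
    exact Ideal.mul_mem_left _ _ (isNilpotent_zeta i)

theorem algebraMap_scalarPart_add_dualPart (u : Zeon n) :
    algebraMap ℂ (Zeon n) (scalarPart n u) + dualPart n u = u := by
  simp [dualPart]

theorem isNilpotent_iff_scalarPart_eq_zero {u : Zeon n} :
    IsNilpotent u ↔ scalarPart n u = 0 := by
  refine ⟨fun hu => (hu.map (scalarPart n)).eq_zero, fun hu => ?_⟩
  rw [← algebraMap_scalarPart_add_dualPart u, hu, map_zero, zero_add]
  exact isNilpotent_dualPart u

theorem isNilpotent_algebraMap_sub_iff (c : ℂ) (u : Zeon n) :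
    IsNilpotent (algebraMap ℂ (Zeon n) c - u) ↔ scalarPart n u = c := by
  rw [isNilpotent_iff_scalarPart_eq_zero, map_sub, AlgHom.commutes, Algebra.algebraMap_self,
    RingHom.id_apply, sub_eq_zero, eq_comm]

theorem isUnit_iff_scalarPart_ne_zero {u : Zeon n} : IsUnit u ↔ scalarPart n u ≠ 0 := by
  refine ⟨fun hu => (hu.map (scalarPart n)).ne_zero, fun hu => ?_⟩
  rw [← algebraMap_scalarPart_add_dualPart u]
  exact (isNilpotent_dualPart u).isUnit_add_left_of_commute
    ((IsUnit.mk0 _ hu).map (algebraMap ℂ (Zeon n))) (Commute.all _ _)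

theorem scalarPart_eval (φ : Polynomial (Zeon n)) (u : Zeon n) :
    scalarPart n (φ.eval u) = (φ.map (scalarPart n).toRingHom).eval (scalarPart n u) :=
  (Polynomial.eval_map_apply (scalarPart n).toRingHom u).symm

end Zeon

theorem stmt17_general (n : ℕ) (φ : Polynomial (Zeon n)) (lam0 : ℂ)
    (h0 : (φ.map (scalarPart n).toRingHom).eval lam0 = 0)
    (h1 : (φ.map (scalarPart n).toRingHom).derivative.eval lam0 ≠ 0) :
    (∃! lam : Zeon n, scalarPart n lam = lam0 ∧ φ.eval lam = 0) ∧
    (∀ lam : Zeon n, scalarPart n lam = lam0 → φ.eval lam = 0 →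
      ∃ q : Polynomial (Zeon n),
        φ = (Polynomial.X - Polynomial.C lam) * q ∧ IsUnit (q.eval lam)) := by
  have isUnit_derivative : ∀ u : Zeon n, scalarPart n u = lam0 →
      IsUnit (φ.derivative.eval u) := by
    intro u hu
    rwa [isUnit_iff_scalarPart_ne_zero, scalarPart_eval, hu, ← Polynomial.derivative_map]
  set x := algebraMap ℂ (Zeon n) lam0
  have hx : scalarPart n x = lam0 := by simp [x]
  have hnil : IsNilpotent (Polynomial.aeval x φ) := by
    rwa [Polynomial.coe_aeval_eq_eval, isNilpotent_iff_scalarPart_eq_zero, scalarPart_eval, hx]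
  refine ⟨?_, fun lam hlam hroot => ?_⟩
  · simpa only [Polynomial.coe_aeval_eq_eval, x, isNilpotent_algebraMap_sub_iff] using
      Polynomial.existsUnique_nilpotent_sub_and_aeval_eq_zero hnil
        (by simpa only [Polynomial.coe_aeval_eq_eval] using isUnit_derivative x hx)
  · obtain ⟨q, hq⟩ := Polynomial.dvd_iff_isRoot.mpr hroot
    refine ⟨q, hq, ?_⟩
    rw [← Polynomial.eval_derivative_X_sub_C_mul, ← hq]
    exact isUnit_derivative lam hlam

/-- Fundamental Theorem of Zeon Algebra (spectrally simple case). -/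
theorem stmt17 (n : ℕ) (φ : Polynomial (Zeon n)) (hmonic : φ.Monic) (lam0 : ℂ)
    (h0 : (φ.map (scalarPart n).toRingHom).eval lam0 = 0)
    (h1 : (φ.map (scalarPart n).toRingHom).derivative.eval lam0 ≠ 0) :
    (∃! lam : Zeon n, scalarPart n lam = lam0 ∧ φ.eval lam = 0) ∧
    (∀ lam : Zeon n, scalarPart n lam = lam0 → φ.eval lam = 0 →
      ∃ q : Polynomial (Zeon n),
        φ = (Polynomial.X - Polynomial.C lam) * q ∧ IsUnit (q.eval lam)) :=
  stmt17_general n φ lam0 h0 h1
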